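/- arXiv:1407.6815 — 3 statements merged into one kernel-verified Lean document; each statement's English description precedes it below -/
import Mathlib

section
/- Let Q(y,z) = yz be the quadratic form on ℝ² in lightlike coordinates. Given points α₀, α₁ ∈ ℝ² with α₀ ≠ α₁, and real numbers r₀², r₁² both nonzero, the set of points γ ∈ ℝ² satisfying Q(γ - α₀) = r₀² and Q(γ - α₁) = r₁² has at most 2 elements. -/
/-!
Subtracting the two equations cancels the quadratic term `γ.1 * γ.2`, so every common point lies on
a line, which is a genuine line because `α₀ ≠ α₁`. Solving the line for one coordinate and
substituting into the first hyperbola gives a polynomial of degree at most two in the other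
coordinate. It is nonzero because its value at the centre's coordinate is a nonzero multiple of
`r0sq`: a hyperbola with nonzero radius contains no line.
-/

open Polynomial Set

theorem Polynomial.encard_le_natDegree_of_injOn {R α : Type*} [CommRing R] [IsDomain R]
    {s : Set α} {π : α → R} (hπ : InjOn π s) {f : R[X]} (hf : f ≠ 0)
    (hroot : ∀ x ∈ s, f.IsRoot (π x)) : s.encard ≤ f.natDegree := by
  classical
  calc s.encard ≤ (f.roots.toFinset : Set R).encard :=
        encard_le_encard_of_injOn (fun x hx ↦ by simpa [hf] using hroot x hx) hπ
    _ ≤ f.natDegree := by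
        rw [encard_coe_eq_coe_finsetCard, Nat.cast_le]
        exact (Multiset.toFinset_card_le _).trans f.card_roots'

section LineHyperbola

variable {K : Type*} [Field K]

theorem encard_line_inter_hyperbola_le_two_of_right_ne_zero {p q c r : K} (α : K × K)
    (hq : q ≠ 0) (hr : r ≠ 0) :
    {γ : K × K | p * γ.1 + q * γ.2 = c ∧ (γ.1 - α.1) * (γ.2 - α.2) = r}.encard ≤ 2 := by
  set f : K[X] := (X - C α.1) * (C (c - q * α.2) - C p * X) - C (q * r)
  have hf : f ≠ 0 := fun h ↦ mul_ne_zero hq hr <| by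
    simpa [f] using congrArg (eval α.1) h
  have hdeg : f.natDegree ≤ 2 := by
    simp only [f]
    compute_degree
  have hinj : InjOn Prod.fst
      {γ : K × K | p * γ.1 + q * γ.2 = c ∧ (γ.1 - α.1) * (γ.2 - α.2) = r} := by
    rintro γ ⟨hγ, -⟩ δ ⟨hδ, -⟩ h
    refine Prod.ext h (mul_left_cancel₀ hq ?_)
    linear_combination hγ - hδ - p * h
  have hroot : ∀ γ ∈ {γ : K × K | p * γ.1 + q * γ.2 = c ∧ (γ.1 - α.1) * (γ.2 - α.2) = r},
      f.IsRoot γ.1 := by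
    rintro γ ⟨hline, hhyp⟩
    simp only [f, IsRoot.def, eval_sub, eval_mul, eval_X, eval_C]
    linear_combination q * hhyp - (γ.1 - α.1) * hline
  exact (encard_le_natDegree_of_injOn hinj hf hroot).trans (by exact_mod_cast hdeg)

theorem encard_line_inter_hyperbola_le_two {p q c r : K} (α : K × K)
    (hpq : p ≠ 0 ∨ q ≠ 0) (hr : r ≠ 0) :
    {γ : K × K | p * γ.1 + q * γ.2 = c ∧ (γ.1 - α.1) * (γ.2 - α.2) = r}.encard ≤ 2 := by
  rcases hpq with hp | hq
  · have hswap : {γ : K × K | p * γ.1 + q * γ.2 = c ∧ (γ.1 - α.1) * (γ.2 - α.2) = r} =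
        Prod.swap '' {γ : K × K | q * γ.1 + p * γ.2 = c ∧ (γ.1 - α.2) * (γ.2 - α.1) = r} := by
      rw [image_swap_eq_preimage_swap]
      ext γ
      simp only [mem_ofPred_eq, mem_preimage, Prod.fst_swap, Prod.snd_swap]
      rw [add_comm, mul_comm (γ.1 - α.1)]
    rw [hswap, Prod.swap_injective.encard_image]
    exact encard_line_inter_hyperbola_le_two_of_right_ne_zero α.swap hp hr
  · exact encard_line_inter_hyperbola_le_two_of_right_ne_zero α hq hr

end LineHyperbola

theorem minkowski_hyperbolae_intersection_card_le_two_general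
    (α₀ α₁ : ℝ × ℝ) (hne : α₀ ≠ α₁) (r0sq r1sq : ℝ)
    (hr0 : r0sq ≠ 0) :
    Set.encard {γ : ℝ × ℝ |
        (γ.1 - α₀.1) * (γ.2 - α₀.2) = r0sq ∧
        (γ.1 - α₁.1) * (γ.2 - α₁.2) = r1sq} ≤ 2 := by
  have hpq : α₁.2 - α₀.2 ≠ 0 ∨ α₁.1 - α₀.1 ≠ 0 := by
    by_contra! h
    exact hne (Prod.ext (sub_eq_zero.1 h.2).symm (sub_eq_zero.1 h.1).symm)
  refine (encard_le_encard ?_).trans <| encard_line_inter_hyperbola_le_two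
    (c := r0sq - r1sq - α₀.1 * α₀.2 + α₁.1 * α₁.2) α₀ hpq hr0
  rintro γ ⟨h₀, h₁⟩
  exact ⟨by linear_combination h₀ - h₁, h₀⟩

/-- In lightlike coordinates on the Minkowski plane, the quadratic form is `Q (y,z) = y * z`.
Two distinct "hyperbolae" with nonzero radii-squared intersect in at most two points. -/
theorem minkowski_hyperbolae_intersection_card_le_two
    (α₀ α₁ : ℝ × ℝ) (hne : α₀ ≠ α₁) (r0sq r1sq : ℝ)
    (hr0 : r0sq ≠ 0) (hr1 : r1sq ≠ 0) :
    Set.encard {γ : ℝ × ℝ |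
        (γ.1 - α₀.1) * (γ.2 - α₀.2) = r0sq ∧
        (γ.1 - α₁.1) * (γ.2 - α₁.2) = r1sq} ≤ 2 :=
  minkowski_hyperbolae_intersection_card_le_two_general α₀ α₁ hne r0sq r1sq hr0
end

section
/- Let φ be the bilinear form φ((x,t),(x',t')) = xx' - tt' on ℝ², and define ‖α‖ ∈ ℝ≥0 ∪ i·ℝ≥0 by ‖α‖² = φ(α,α) (taking the square root with nonnegative real or nonnegative imaginary part). If α, β ∈ ℝ² satisfy ‖α‖ + ‖β‖ = ‖α + β‖ (as complex numbers), then α and β are linearly dependent. -/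
/-!
Squaring `‖α‖ + ‖β‖ = ‖α + β‖` and comparing with `q (α + β) = q α + q β + 2 φ(α, β)` gives
`‖α‖ ‖β‖ = φ(α, β)`; squaring once more, `φ(α, β)² = q α · q β`. In the Minkowski plane the
Cauchy–Schwarz defect is a perfect square, `φ(α, β)² - q α · q β = (x t' - t x')²`, so the
determinant of `α, β` vanishes.
-/

/-- The Minkowski quadratic form on `ℝ²`: `q (x,t) = x² - t²`. -/
noncomputable def minkQ (α : ℝ × ℝ) : ℝ := α.1 ^ 2 - α.2 ^ 2

/-- The Minkowski pseudo-norm, valued in `ℝ≥0 ∪ i·ℝ≥0 ⊆ ℂ`: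
`√(q α)` if `q α ≥ 0`, and `i·√(-q α)` otherwise. -/
noncomputable def minkNorm (α : ℝ × ℝ) : ℂ :=
  if 0 ≤ minkQ α then (Real.sqrt (minkQ α) : ℂ)
  else Complex.I * (Real.sqrt (-minkQ α) : ℂ)

open Module in
theorem LinearIndependent.fst_mul_snd_sub_ne_zero {K : Type*} [Field K] {α β : K × K}
    (h : LinearIndependent K ![α, β]) : α.1 * β.2 - α.2 * β.1 ≠ 0 := by
  have hspan : Submodule.span K (Set.range ![α, β]) = ⊤ :=
    h.span_eq_top_of_card_eq_finrank' (by simp)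
  have hdet := ((Basis.finTwoProd K).is_basis_iff_det).mp ⟨h, hspan⟩
  rw [Basis.det_apply, Matrix.det_fin_two] at hdet
  simpa [Basis.toMatrix_apply, mul_comm α.2] using hdet.ne_zero

theorem mul_eq_of_add_sq_eq {R : Type*} [CommRing R] [NoZeroDivisors R] [NeZero (2 : R)]
    {a b r : R} (h : (a + b) ^ 2 = a ^ 2 + b ^ 2 + 2 * r) : a * b = r :=
  mul_left_cancel₀ (NeZero.ne (2 : R)) (by linear_combination h)

/-- The polar bilinear form `φ` of `minkQ`. -/
def minkInner (α β : ℝ × ℝ) : ℝ := α.1 * β.1 - α.2 * β.2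

theorem minkQ_add (α β : ℝ × ℝ) :
    minkQ (α + β) = minkQ α + minkQ β + 2 * minkInner α β := by
  simp only [minkQ, minkInner, Prod.fst_add, Prod.snd_add]
  ring

theorem minkInner_sq_sub_minkQ_mul (α β : ℝ × ℝ) :
    minkInner α β ^ 2 - minkQ α * minkQ β = (α.1 * β.2 - α.2 * β.1) ^ 2 := by
  simp only [minkQ, minkInner]
  ring

theorem minkNorm_sq (α : ℝ × ℝ) : minkNorm α ^ 2 = minkQ α := by
  unfold minkNorm
  split_ifs with hq
  · rw [← Complex.ofReal_pow, Real.sq_sqrt hq]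
  · rw [mul_pow, Complex.I_sq, ← Complex.ofReal_pow, Real.sq_sqrt (by linarith)]
    push_cast
    ring

theorem minkNorm_mul_of_add_eq {α β : ℝ × ℝ}
    (h : minkNorm α + minkNorm β = minkNorm (α + β)) :
    minkNorm α * minkNorm β = minkInner α β := by
  apply mul_eq_of_add_sq_eq
  rw [h, minkNorm_sq, minkNorm_sq, minkNorm_sq, minkQ_add]
  push_cast
  ring

theorem minkInner_sq_of_add_eq {α β : ℝ × ℝ}
    (h : minkNorm α + minkNorm β = minkNorm (α + β)) :
    minkInner α β ^ 2 = minkQ α * minkQ β := by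
  have hC : ((minkInner α β ^ 2 : ℝ) : ℂ) = ((minkQ α * minkQ β : ℝ) : ℂ) := by
    push_cast
    rw [← minkNorm_mul_of_add_eq h, mul_pow, minkNorm_sq, minkNorm_sq]
  exact_mod_cast hC

/-- Equality case of the triangle inequality in the Minkowski plane:
`‖α‖ + ‖β‖ = ‖α + β‖` forces `α` and `β` to be linearly dependent. -/
theorem minkowski_triangle_equality_collinear (α β : ℝ × ℝ)
    (h : minkNorm α + minkNorm β = minkNorm (α + β)) :
    ¬ LinearIndependent ℝ ![α, β] := by
  intro hli
  have hdet : (α.1 * β.2 - α.2 * β.1) ^ 2 = 0 := by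
    rw [← minkInner_sq_sub_minkQ_mul, minkInner_sq_of_add_eq h, sub_self]
  exact hli.fst_mul_snd_sub_ne_zero (pow_eq_zero_iff two_ne_zero |>.mp hdet)
end

section
/- In the Poincaré half-plane model, fix l > r > 0 and real numbers D with cosh D ≤ cosh r. Define y_b = (cosh r + √((cosh r)² - (cosh D)²)) / (cosh l + √((cosh l)² - (cosh D)²)) and y_c = (cosh D)² / ((cosh r + √((cosh r)² - (cosh D)²))·(cosh l + √((cosh l)² - (cosh D)²))). Then with y_α = cosh l / cosh r, one has (y_α - y_b)·(y_α - y_c) = (cosh l / cosh r)² - 1. -/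
/-!
Rationalising the denominator turns `y_c` into `(cosh r - s_r) / (cosh l + s_l)`, the conjugate
of `y_b = (cosh r + s_r) / (cosh l + s_l)`, where `s_x = √(cosh² x - cosh² D)`. Then
`y_b + y_c = 2 cosh r / L` and `y_b y_c = cosh² D / L²` with `L = cosh l + s_l`, and the claim
reduces to `L² - 2 L cosh l + cosh² D = s_l² - cosh² l + cosh² D = 0`.
-/

open Real

lemma sq_div_add_eq_sub {x s d : ℝ} (hs : s ^ 2 = x ^ 2 - d ^ 2) (hxs : x + s ≠ 0) :
    d ^ 2 / (x + s) = x - s := by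
  rw [div_eq_iff hxs]
  linear_combination hs

lemma sub_div_add_mul_sub_div_sub {c₁ c₂ s₁ s₂ d : ℝ}
    (h₁ : s₁ ^ 2 = c₁ ^ 2 - d ^ 2) (h₂ : s₂ ^ 2 = c₂ ^ 2 - d ^ 2)
    (hc₁ : c₁ ≠ 0) (hL : c₂ + s₂ ≠ 0) :
    (c₂ / c₁ - (c₁ + s₁) / (c₂ + s₂)) * (c₂ / c₁ - (c₁ - s₁) / (c₂ + s₂)) =
      (c₂ / c₁) ^ 2 - 1 := by
  field_simp
  linear_combination c₁ ^ 2 * h₂ - c₁ ^ 2 * h₁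

lemma sq_sqrt_sq_sub_sq {x d : ℝ} (hd : 0 ≤ d) (hdx : d ≤ x) :
    √(x ^ 2 - d ^ 2) ^ 2 = x ^ 2 - d ^ 2 :=
  sq_sqrt (sub_nonneg.mpr (pow_le_pow_left₀ hd hdx 2))

/-- The key computation for the hyperbolic Peaucellier inversor: the points `b` and `c`
on the vertical axis are exchanged by the Euclidean inversion in the circle of Euclidean
center `(0, cosh l / cosh r)` and radius `√((cosh l / cosh r)² - 1)`. -/
theorem hyperbolic_peaucellier_inversion (l r D : ℝ) (hr : 0 < r) (hlr : r < l)
    (hD : Real.cosh D ≤ Real.cosh r)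
    (yb yc yα : ℝ)
    (hyb : yb = (Real.cosh r + Real.sqrt ((Real.cosh r) ^ 2 - (Real.cosh D) ^ 2)) /
      (Real.cosh l + Real.sqrt ((Real.cosh l) ^ 2 - (Real.cosh D) ^ 2)))
    (hyc : yc = (Real.cosh D) ^ 2 /
      ((Real.cosh r + Real.sqrt ((Real.cosh r) ^ 2 - (Real.cosh D) ^ 2)) *
       (Real.cosh l + Real.sqrt ((Real.cosh l) ^ 2 - (Real.cosh D) ^ 2))))
    (hyα : yα = Real.cosh l / Real.cosh r) :
    (yα - yb) * (yα - yc) = (Real.cosh l / Real.cosh r) ^ 2 - 1 := by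
  have hrl : cosh r ≤ cosh l := cosh_le_cosh.mpr <| by
    rw [abs_of_pos hr, abs_of_pos (hr.trans hlr)]
    exact hlr.le
  have hsr := sq_sqrt_sq_sub_sq (cosh_pos D).le hD
  have hsl := sq_sqrt_sq_sub_sq (cosh_pos D).le (hD.trans hrl)
  have hRpos : 0 < cosh r + √(cosh r ^ 2 - cosh D ^ 2) :=
    add_pos_of_pos_of_nonneg (cosh_pos r) (sqrt_nonneg _)
  have hLpos : 0 < cosh l + √(cosh l ^ 2 - cosh D ^ 2) :=
    add_pos_of_pos_of_nonneg (cosh_pos l) (sqrt_nonneg _)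
  rw [hyc, ← div_div, sq_div_add_eq_sub hsr hRpos.ne', hyα, hyb]
  exact sub_div_add_mul_sub_div_sub hsr hsl (cosh_pos r).ne' hLpos.ne'
end
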